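/- Let (α,β) be an admissible pair. Then the sets of decimals Ω^•_{(α,β,−)}, Ω^•_{(α,β,+)}, and Ω^•_{(α,β)} are each shift invariant. -/

import Mathlib

open scoped Classical

/-- Infinite binary strings. -/
abbrev Omega : Type := ℕ → Bool

/-- The shift operator. -/
def shift (ω : Omega) : Omega := fun n => ω (n + 1)

/-- Strict lexicographic order on `Omega`. -/
def lexLt (σ ω : Omega) : Prop :=
  ∃ k : ℕ, (∀ i, i < k → σ i = ω i) ∧ σ k < ω k

/-- Non-strict lexicographic order on `Omega`. -/
def lexLe (σ ω : Omega) : Prop := lexLt σ ω ∨ σ = ω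

/-- An admissible pair of strings. -/
def Admissible (α β : Omega) : Prop :=
  α 0 = false ∧ α 1 = true ∧ β 0 = true ∧ β 1 = false ∧
  (∀ n : ℕ, ¬ (lexLt α (shift^[n] α) ∧ lexLe (shift^[n] α) β)) ∧
  (∀ n : ℕ, ¬ (lexLe α (shift^[n] β) ∧ lexLt (shift^[n] β) β))

/-- The address space `Ω_{(α,β,−)}`. -/
def OmegaMinus (α β : Omega) : Set Omega :=
  {ω | ∀ n : ℕ, ¬ (lexLt α (shift^[n] ω) ∧ lexLe (shift^[n] ω) β)}

/-- The address space `Ω_{(α,β,+)}`. -/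
def OmegaPlus (α β : Omega) : Set Omega :=
  {ω | ∀ n : ℕ, ¬ (lexLe α (shift^[n] ω) ∧ lexLt (shift^[n] ω) β)}

/-- The address space `Ω_{(α,β)}`. -/
def OmegaUnion (α β : Omega) : Set Omega := OmegaMinus α β ∪ OmegaPlus α β

/-- Length-`n` initial segments of the elements of `Γ`. -/
def initSegs (Γ : Set Omega) (n : ℕ) : Set (Fin n → Bool) :=
  (fun ω (i : Fin n) => ω i) '' Γ

/-- Exponential growth rate `h(Γ)`. -/
noncomputable def growth (Γ : Set Omega) : ℝ :=
  Filter.limsup (fun n : ℕ => Real.log ((initSegs Γ n).ncard) / (n : ℝ)) Filter.atTop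

/-- The projection map `π_x`. -/
noncomputable def proj (x : ℝ) (ω : Omega) : ℝ :=
  (1 - x) * ∑' k : ℕ, (if ω k then (1 : ℝ) else 0) * x ^ k

/-- The equation `Σ α_n x^n = Σ β_n x^n`. -/
def seriesEq (α β : Omega) (x : ℝ) : Prop :=
  (∑' n : ℕ, (if α n then (1 : ℝ) else 0) * x ^ n) =
    (∑' n : ℕ, (if β n then (1 : ℝ) else 0) * x ^ n)

/-- Solutions in `[1/2,1)` of `Σ α_n x^n = Σ β_n x^n`. -/
def baseSet (α β : Omega) : Set ℝ :=
  {x : ℝ | x ∈ Set.Ico (1/2 : ℝ) 1 ∧ seriesEq α β x}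

/-- A decimal: a two-sided binary string vanishing far to the left. -/
def IsDecimal (d : ℤ → Bool) : Prop := ∃ m : ℤ, ∀ j, j < m → d j = false

/-- Strict order on decimals. -/
def decLt (d e : ℤ → Bool) : Prop :=
  ∃ j : ℤ, (∀ i, i < j → d i = e i) ∧ d j < e j

/-- The set `Γ^•` of decimals obtained from strings in `Γ`. -/
def dot (Γ : Set Omega) : Set (ℤ → Bool) :=
  {d | ∃ m : ℤ, ∃ γ ∈ Γ, (∀ j, j < m → d j = false) ∧ ∀ i : ℕ, d (m + i) = γ i}

/-- Prepend a `0` to a string. -/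
def cons0 (ω : Omega) : Omega := fun n => match n with | 0 => false | k + 1 => ω k

/-- The space `Ω⁰_{(α,β,−)}`. -/
def Omega0Minus (α β : Omega) : Set Omega :=
  {ω ∈ OmegaMinus α β | lexLe (cons0 ω) α}

/-- The space `Ω⁰_{(α,β,+)}`. -/
def Omega0Plus (α β : Omega) : Set Omega :=
  {ω ∈ OmegaPlus α β | lexLt (cons0 ω) α}

/-- The address space of decimals `Ω^•_{(α,β,−)}`. -/
def dotMinus (α β : Omega) : Set (ℤ → Bool) := dot (Omega0Minus α β)

/-- The address space of decimals `Ω^•_{(α,β,+)}`. -/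
def dotPlus (α β : Omega) : Set (ℤ → Bool) := dot (Omega0Plus α β)

/-- The address space of decimals `Ω^•_{(α,β)}`. -/
def dotUnion (α β : Omega) : Set (ℤ → Bool) :=
  dot (Omega0Minus α β ∪ Omega0Plus α β)

/-- The radix map `d ↦ Σ_{j ∈ ℤ} d(j)·B^(−j)`. -/
noncomputable def radixVal (B : ℝ) (d : ℤ → Bool) : ℝ :=
  ∑' j : ℤ, (if d j then (1 : ℝ) else 0) * B ^ (-j)

/-- Shift invariance for a set of decimals. -/
def ShiftInvariantDec (Γ : Set (ℤ → Bool)) : Prop :=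
  ∀ d ∈ Γ, ∀ k m : ℤ,
    (fun j : ℤ => if m ≤ j then d (j + k) else false) ∈ Γ

/-!
The shift of a decimal in `Γ^•` reads a tail of a string of `Γ`, so `Γ^•` is shift invariant
as soon as `Γ` is closed under `S`. The spaces `Ω_{(α,β,±)}` are closed under `S` by
definition, and the extra condition `0ω ⪯ α`, i.e. `ω ⪯ Sα`, survives the shift: if `ω₀ = 0`,
the condition at `n = 0` together with `ω ≺ β` forces `ω ⪯ α`, hence `Sω ⪯ Sα`; if `ω₀ = 1`,
then `Sω ⪯ S²α ⪯ Sα`, because a string starting with `1` is never below its own shift.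
-/

lemma lexLt_iff_toLex_lt {σ ω : Omega} : lexLt σ ω ↔ toLex σ < toLex ω := Iff.rfl

lemma lexLe_iff_toLex_le {σ ω : Omega} : lexLe σ ω ↔ toLex σ ≤ toLex ω := by
  rw [le_iff_lt_or_eq, toLex_inj]
  rfl

lemma shift_iterate_apply (t i : ℕ) (ω : Omega) : shift^[t] ω i = ω (i + t) := by
  induction t generalizing ω with
  | zero => rfl
  | succ t ih => rw [Function.iterate_succ_apply, ih]; rfl

lemma shift_cons0 (ω : Omega) : shift (cons0 ω) = ω := rfl

lemma lexLt_shift_iff {σ ω : Omega} (h : σ 0 = ω 0) :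
    lexLt (shift σ) (shift ω) ↔ lexLt σ ω := by
  constructor
  · rintro ⟨k, hk, hlt⟩
    refine ⟨k + 1, fun i hi => ?_, hlt⟩
    rcases i with _ | i
    exacts [h, hk i (by omega)]
  · rintro ⟨_ | k, hk, hlt⟩
    · exact absurd h hlt.ne
    · exact ⟨k, fun i hi => hk (i + 1) (by omega), hlt⟩

lemma lexLe_shift_iff {σ ω : Omega} (h : σ 0 = ω 0) :
    lexLe (shift σ) (shift ω) ↔ lexLe σ ω := by
  refine or_congr (lexLt_shift_iff h) ⟨fun he => funext fun i => ?_, fun he => he ▸ rfl⟩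
  rcases i with _ | i
  exacts [h, congrFun he i]

lemma lexLt_cons0_iff {ω α : Omega} (hα0 : α 0 = false) :
    lexLt (cons0 ω) α ↔ lexLt ω (shift α) := by
  rw [← lexLt_shift_iff (by simp [cons0, hα0]), shift_cons0]

lemma lexLe_cons0_iff {ω α : Omega} (hα0 : α 0 = false) :
    lexLe (cons0 ω) α ↔ lexLe ω (shift α) := by
  rw [← lexLe_shift_iff (by simp [cons0, hα0]), shift_cons0]

lemma lexLt_of_head_lt {σ ω : Omega} (h : σ 0 < ω 0) : lexLt σ ω :=
  ⟨0, fun _ hi => absurd hi (Nat.not_lt_zero _), h⟩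

lemma lexLe_shift_self {σ : Omega} (h : σ 0 = true) : lexLe (shift σ) σ := by
  suffices ¬ lexLt σ (shift σ) by rwa [lexLe_iff_toLex_le, ← not_lt]
  rintro ⟨k, hk, hlt⟩
  have hconst : ∀ i ≤ k, σ i = true := by
    intro i hi
    induction i with
    | zero => exact h
    | succ i ih => exact (hk i (by omega)).symm.trans (ih (by omega))
  exact (hconst k le_rfl ▸ hlt).not_ge le_top

lemma mapsTo_shift_omegaMinus (α β : Omega) :
    Set.MapsTo shift (OmegaMinus α β) (OmegaMinus α β) :=
  fun _ hω n => by simpa only [Function.iterate_succ_apply] using hω (n + 1)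

lemma mapsTo_shift_omegaPlus (α β : Omega) :
    Set.MapsTo shift (OmegaPlus α β) (OmegaPlus α β) :=
  fun _ hω n => by simpa only [Function.iterate_succ_apply] using hω (n + 1)

lemma mapsTo_shift_omega0Minus {α β : Omega} (hα0 : α 0 = false) (hα1 : α 1 = true)
    (hβ0 : β 0 = true) :
    Set.MapsTo shift (Omega0Minus α β) (Omega0Minus α β) := by
  rintro ω ⟨hω, hωα⟩
  refine ⟨mapsTo_shift_omegaMinus α β hω, ?_⟩
  rw [lexLe_cons0_iff hα0] at hωα ⊢
  cases hω0 : ω 0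
  · have hωα : lexLe ω α := lexLe_iff_toLex_le.mpr <| le_of_not_gt fun hαω =>
      hω 0 ⟨hαω, Or.inl (lexLt_of_head_lt (by simp [hω0, hβ0]))⟩
    exact (lexLe_shift_iff (by rw [hω0, hα0])).mpr hωα
  · have := (lexLe_shift_iff (by rw [hω0]; exact hα1.symm)).mpr hωα
    rw [lexLe_iff_toLex_le] at this ⊢
    exact this.trans (lexLe_iff_toLex_le.mp (lexLe_shift_self hα1))

lemma mapsTo_shift_omega0Plus {α β : Omega} (hα0 : α 0 = false) (hα1 : α 1 = true)
    (hβ0 : β 0 = true) :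
    Set.MapsTo shift (Omega0Plus α β) (Omega0Plus α β) := by
  rintro ω ⟨hω, hωα⟩
  refine ⟨mapsTo_shift_omegaPlus α β hω, ?_⟩
  rw [lexLt_cons0_iff hα0] at hωα ⊢
  cases hω0 : ω 0
  · have hωα : lexLt ω α := lexLt_iff_toLex_lt.mpr <| lt_of_not_ge fun hαω =>
      hω 0 ⟨lexLe_iff_toLex_le.mpr hαω, lexLt_of_head_lt (by simp [hω0, hβ0])⟩
    exact (lexLt_shift_iff (by rw [hω0, hα0])).mpr hωα
  · have := (lexLt_shift_iff (by rw [hω0]; exact hα1.symm)).mpr hωα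
    rw [lexLt_iff_toLex_lt] at this ⊢
    exact this.trans_le (lexLe_iff_toLex_le.mp (lexLe_shift_self hα1))

lemma shiftInvariantDec_dot {Γ : Set Omega} (hΓ : Set.MapsTo shift Γ Γ) :
    ShiftInvariantDec (dot Γ) := by
  rintro d ⟨m₀, γ, hγ, hzero, hγd⟩ k m
  -- the new decimal vanishes below `m'` and reads `γ` from position `t` on
  set m' := max m (m₀ - k) with hm'
  obtain ⟨t, ht⟩ : ∃ t : ℕ, m' + k = m₀ + t := ⟨(m' + k - m₀).toNat, by omega⟩
  refine ⟨m', shift^[t] γ, hΓ.iterate t hγ, fun j hj => ?_, fun i => ?_⟩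
  · dsimp only
    split_ifs with hmj
    · exact hzero (j + k) (by omega)
    · rfl
  · dsimp only
    rw [if_pos (by omega), shift_iterate_apply,
      show m' + i + k = m₀ + ↑(i + t) by push_cast; omega]
    exact hγd (i + t)

/-- For an admissible pair `(α,β)`, the sets of decimals `Ω^•_{(α,β,−)}`,
`Ω^•_{(α,β,+)}` and `Ω^•_{(α,β)}` are shift invariant. -/
theorem stmt_4 (α β : Omega) (hadm : Admissible α β) :
    ShiftInvariantDec (dotMinus α β) ∧ ShiftInvariantDec (dotPlus α β) ∧
    ShiftInvariantDec (dotUnion α β) := by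
  obtain ⟨hα0, hα1, hβ0, -⟩ := hadm
  have hminus := mapsTo_shift_omega0Minus hα0 hα1 hβ0
  have hplus := mapsTo_shift_omega0Plus hα0 hα1 hβ0
  exact ⟨shiftInvariantDec_dot hminus, shiftInvariantDec_dot hplus,
    shiftInvariantDec_dot (hminus.union_union hplus)⟩
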